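/- Let g be a finite-dimensional real Lie algebra equipped with a flat pseudo-Riemannian structure (B, ·), and for x ∈ g let R_x : g → g denote the map y ↦ y·x. Then trace(R_x) = 0 for all x ∈ g if and only if trace(ad_x) = 0 for all x ∈ g. (Equivalently, by Helmstetter's completeness criterion and the Aubert–Medina correspondence: the Levi-Civita connection of a left-invariant flat pseudo-metric on a connected Lie group is geodesically complete if and only if the group is unimodular.) -/
import Mathlib


/-- **Aubert–Medina / Helmstetter.** For a flat pseudo-Riemannian structure `(B, ·)`
on a finite-dimensional real Lie algebra `g`, the right multiplications
`R_x : y ↦ y·x` all have trace zero if and only if all adjoint maps `ad_x` have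
trace zero (i.e. the group is unimodular iff the connection is complete). -/
theorem complete_iff_unimodular
    (g : Type*) [LieRing g] [LieAlgebra ℝ g] [FiniteDimensional ℝ g]
    (B : LinearMap.BilinForm ℝ g) (hB : B.Nondegenerate)
    (hsymm : ∀ x y : g, B x y = B y x)
    (P : g →ₗ[ℝ] g →ₗ[ℝ] g)
    (h1 : ∀ x y : g, P x y - P y x = ⁅x, y⁆)
    (h2 : ∀ x y z : g, B (P x y) z + B y (P x z) = 0)
    (h3 : ∀ x y : g, P ⁅x, y⁆ = P x ∘ₗ P y - P y ∘ₗ P x) :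
    (∀ x : g, LinearMap.trace ℝ g (P.flip x) = 0) ↔
      (∀ x : g, LinearMap.trace ℝ g (LieAlgebra.ad ℝ g x) = 0) := by
  have hL : ∀ x : g, LinearMap.trace ℝ g (P x) = 0 := by
    intro x
    have key : (B.toDual hB).conj (P x) = - Module.Dual.transpose (R := ℝ) (P x) := by
      apply LinearMap.ext; intro φ
      obtain ⟨z, rfl⟩ := (B.toDual hB).surjective φ
      apply LinearMap.ext; intro y
      simp only [LinearEquiv.conj_apply, LinearMap.comp_apply, LinearEquiv.symm_apply_apply,
        LinearEquiv.coe_coe, LinearMap.neg_apply, Module.Dual.transpose_apply,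
        LinearMap.BilinForm.toDual_def]
      linarith [h2 x z y]
    have t1 := LinearMap.trace_conj' (P x) (B.toDual hB)
    rw [key] at t1
    have t2 := (LinearMap.trace ℝ (Module.Dual ℝ g)).map_neg (Module.Dual.transpose (R := ℝ) (P x))
    have t3 := LinearMap.trace_transpose' (P x)
    rw [t2, t3] at t1
    linarith
  have had : ∀ x : g, (LieAlgebra.ad ℝ g x : g →ₗ[ℝ] g) = P x - P.flip x := by
    intro x; ext y; simp [← h1 x y]
  constructor <;> intro h x
  · rw [had, map_sub, hL, h]; ring
  · have := h x; rw [had, map_sub, hL] at this; linarith
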